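/- arXiv:2111.13758 — 3 statements merged into one kernel-verified Lean document; each statement's English description precedes it below -/
import Mathlib

section
/- Let α, β > 0 with β ∉ ℚ. Then A_{α,β} is a closed subset of (𝔈, τ), i.e., 𝔈 − A_{α,β} is open in 𝔈. -/
noncomputable section

open scoped ENNReal

/-- The ambient Hilbert space `ℓ²` of real square-summable sequences. -/
abbrev ellTwo : Type := lp (fun _ : ℕ => ℝ) 2

/-- Erdős space `𝔈`: the additive subgroup of `ℓ²` consisting of the sequences
all of whose coordinates are rational. -/
def Erdos : AddSubgroup ellTwo where
  carrier := {x | ∀ k, ∃ q : ℚ, (x : ℕ → ℝ) k = (q : ℝ)}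
  add_mem' := by
    intro a b ha hb k
    obtain ⟨p, hp⟩ := ha k
    obtain ⟨q, hq⟩ := hb k
    exact ⟨p + q, by rw [lp.coeFn_add]; simp [hp, hq]⟩
  zero_mem' := fun k => ⟨0, by simp⟩
  neg_mem' := by
    intro a ha k
    obtain ⟨p, hp⟩ := ha k
    exact ⟨-p, by rw [lp.coeFn_neg]; simp [hp]⟩

/-- Erdős space as a type (with the subspace topology and norm inherited from `ℓ²`). -/
abbrev ErdosSpace : Type := ↥Erdos

/-- The coordinates of a point of Erdős space (indexed from `0`, so that the
coordinate `x_k` of the paper is `coords x (k-1)`). -/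
def coords (x : ErdosSpace) : ℕ → ℝ := ((x : ellTwo) : ℕ → ℝ)

/-- `mExists x α` says that `m_{x,α}` exists, i.e. some finite initial sum of squares
of coordinates exceeds `α` (here `m` counts how many initial coordinates are taken). -/
def mExists (x : ErdosSpace) (α : ℝ) : Prop :=
  ∃ m : ℕ, α < Real.sqrt (∑ k ∈ Finset.range m, (coords x k) ^ 2)

/-- `mIndex x α` is the least `m` such that `√(∑_{k<m} x_k²) > α` (and `0` if none exists);
this corresponds to `m_{x,α}` of the paper. -/
def mIndex (x : ErdosSpace) (α : ℝ) : ℕ :=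
  sInf {m : ℕ | α < Real.sqrt (∑ k ∈ Finset.range m, (coords x k) ^ 2)}

/-- The set `A_{α,β}`: those `x` for which either `m_{x,α}` exists and every coordinate
beyond the first `m_{x,α}` ones has absolute value `< β`, or `m_{x,α}` does not exist. -/
def A (α β : ℝ) : Set ErdosSpace :=
  {x | (mExists x α ∧ ∀ l, mIndex x α ≤ l → |coords x l| < β) ∨ ¬mExists x α}


lemma coords_continuous (k : ℕ) : Continuous fun x : ErdosSpace => coords x k := by
  have h : LipschitzWith 1 fun f : ellTwo => (f : ℕ → ℝ) k := by
    apply LipschitzWith.of_dist_le_mul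
    intro f g
    simp only [NNReal.coe_one, one_mul, dist_eq_norm, Real.norm_eq_abs]
    have := lp.norm_apply_le_norm (p := (2 : ℝ≥0∞)) two_ne_zero (f - g) k
    simpa [Real.norm_eq_abs] using this
  exact h.continuous.comp continuous_subtype_val

/-- Claim 2: for `α, β > 0` with `β` irrational, `A_{α,β}` is closed in Erdős space. -/
theorem A_isClosed (α β : ℝ) (hα : 0 < α) (hβ : 0 < β) (hβirr : Irrational β) :
    IsClosed (A α β) := by
  rw [← isOpen_compl_iff]
  have hset : (A α β)ᶜ = ⋃ m : ℕ, ⋃ l : ℕ, ⋃ _ : m ≤ l,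
      {y : ErdosSpace | α < Real.sqrt (∑ k ∈ Finset.range m, (coords y k) ^ 2)
        ∧ β < |coords y l|} := by
    ext x
    simp only [Set.mem_compl_iff, Set.mem_iUnion, Set.mem_setOf_eq, A]
    constructor
    · intro hx
      push_neg at hx
      obtain ⟨h1, h2⟩ := hx
      have hex := h2
      obtain ⟨l, hl, hlβ⟩ := h1 hex
      refine ⟨mIndex x α, l, hl, ?_, ?_⟩
      · exact Nat.sInf_mem hex
      · -- β ≤ |coords x l| and coords x l is rational, β irrational
        have hβle : β ≤ |coords x l| := hlβ
        obtain ⟨q, hq⟩ := x.2 l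
        have hne : β ≠ |coords x l| := by
          intro h
          apply hβirr.ne_rat |q|
          rw [h]
          show |coords x l| = ((|q| : ℚ) : ℝ)
          rw [show coords x l = (q : ℝ) from hq]
          push_cast
          rfl
        exact lt_of_le_of_ne hβle hne
    · rintro ⟨m, l, hml, h1, h2⟩
      have hex : mExists x α := ⟨m, h1⟩
      have hidx : mIndex x α ≤ m := Nat.sInf_le h1
      rintro (⟨-, hall⟩ | hnex)
      · exact absurd (hall l (hidx.trans hml)) (not_lt.mpr h2.le)
      · exact hnex hex
  rw [hset]
  refine isOpen_iUnion fun m => isOpen_iUnion fun l => isOpen_iUnion fun _ => ?_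
  have hc1 : Continuous fun y : ErdosSpace =>
      Real.sqrt (∑ k ∈ Finset.range m, (coords y k) ^ 2) := by
    apply Real.continuous_sqrt.comp
    exact continuous_finset_sum _ fun k _ => (coords_continuous k).pow 2
  have hc2 : Continuous fun y : ErdosSpace => |coords y l| :=
    (coords_continuous l).abs
  exact (isOpen_lt continuous_const hc1).inter (isOpen_lt continuous_const hc2)
end
end

section
/- Let α > 0 and let x ∈ 𝔈 be such that m_{x,α} exists. If y ∈ 𝔈 satisfies ‖x − y‖ < √(∑_{k=1}^{m_{x,α}} |x_k|²) − α, then m_{y,α} exists and m_{y,α} ≤ m_{x,α}. -/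
noncomputable section

open scoped ENNReal

/-! Truncating to the first `m` coordinates does not increase the `ℓ²` norm, so by the reverse
triangle inequality in Euclidean `ℝᵐ` (with `m = m_{x,α}`) the truncated norm of `y` exceeds
that of `x` minus `‖x - y‖`, which is still more than `α`. -/

theorem Real.sqrt_sum_sq_le_add_sqrt_sum_sq_sub {ι : Type*} (s : Finset ι) (f g : ι → ℝ) :
    √(∑ i ∈ s, f i ^ 2) ≤ √(∑ i ∈ s, g i ^ 2) + √(∑ i ∈ s, (f i - g i) ^ 2) := by
  have norm_eq (h : ι → ℝ) :
      ‖(WithLp.toLp 2 (fun i : s => h i) : EuclideanSpace ℝ s)‖ = √(∑ i ∈ s, h i ^ 2) := by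
    rw [EuclideanSpace.norm_eq, ← Finset.sum_coe_sort s]
    simp only [Real.norm_eq_abs, sq_abs]
  rw [← norm_eq f, ← norm_eq g, ← norm_eq (fun i => f i - g i)]
  exact norm_le_norm_add_norm_sub' _ _

theorem lp.sqrt_sum_sq_norm_le_norm {ι : Type*} {E : ι → Type*} [∀ i, NormedAddCommGroup (E i)]
    (f : lp E 2) (s : Finset ι) : √(∑ i ∈ s, ‖f i‖ ^ 2) ≤ ‖f‖ := by
  have h := lp.sum_rpow_le_norm_rpow (by norm_num) f s
  norm_num only [ENNReal.toReal_ofNat, Real.rpow_two] at h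
  exact (Real.sqrt_le_sqrt h).trans_eq (Real.sqrt_sq (norm_nonneg f))

theorem sqrt_sum_sq_coords_sub_le_norm (x y : ErdosSpace) (s : Finset ℕ) :
    √(∑ k ∈ s, (coords x k - coords y k) ^ 2) ≤ ‖x - y‖ := by
  have h := lp.sqrt_sum_sq_norm_le_norm ((x - y : ErdosSpace) : ellTwo) s
  simp only [Real.norm_eq_abs, sq_abs] at h
  exact h

theorem lt_sqrt_sum_sq_mIndex {x : ErdosSpace} {α : ℝ} (hx : mExists x α) :
    α < √(∑ k ∈ Finset.range (mIndex x α), coords x k ^ 2) :=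
  Nat.sInf_mem hx

theorem mIndex_le {x : ErdosSpace} {α : ℝ} {m : ℕ}
    (hm : α < √(∑ k ∈ Finset.range m, coords x k ^ 2)) : mIndex x α ≤ m :=
  Nat.sInf_le hm

theorem mIndex_le_of_close_general (α : ℝ) (x : ErdosSpace) (hx : mExists x α)
    (y : ErdosSpace)
    (hy : ‖x - y‖ < Real.sqrt (∑ k ∈ Finset.range (mIndex x α), (coords x k) ^ 2) - α) :
    mExists y α ∧ mIndex y α ≤ mIndex x α := by
  set m := mIndex x α
  have hxm := lt_sqrt_sum_sq_mIndex hx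
  have hym : α < √(∑ k ∈ Finset.range m, coords y k ^ 2) := by
    linarith [sqrt_sum_sq_coords_sub_le_norm x y (Finset.range m),
      Real.sqrt_sum_sq_le_add_sqrt_sum_sq_sub (Finset.range m) (coords x) (coords y)]
  exact ⟨⟨m, hym⟩, mIndex_le hym⟩

/-- If `m_{x,α}` exists and `‖x - y‖ < √(∑_{k=1}^{m_{x,α}} x_k²) - α`, then `m_{y,α}`
exists and `m_{y,α} ≤ m_{x,α}`. -/
theorem mIndex_le_of_close (α : ℝ) (hα : 0 < α) (x : ErdosSpace) (hx : mExists x α)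
    (y : ErdosSpace)
    (hy : ‖x - y‖ < Real.sqrt (∑ k ∈ Finset.range (mIndex x α), (coords x k) ^ 2) - α) :
    mExists y α ∧ mIndex y α ≤ mIndex x α :=
  mIndex_le_of_close_general α x hx y hy
end
end

section
/- Let O = ⋂_{n∈ℕ⁺} A_{α_n,β_n}. If K is any unbounded subset of 𝔈 and ε > 0, then K + B(0, ε) ⊄ O, where B(0, ε) = {y ∈ 𝔈 : ‖y‖ < ε}; i.e., there exist x ∈ K and y ∈ 𝔈 with ‖y‖ < ε and x + y ∉ O. -/
noncomputable section

open scoped ENNReal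

/-! Since `βₙ → 0`, fix `n` with `β := βₙ < ε` and, by unboundedness, `x ∈ K` with `‖x‖ > α := αₙ`.
Some initial segment `x₀, …, x_{m-1}` already has norm `> α`, and since `xₖ → 0` there is `j ≥ m`
with `|xⱼ| < q - β` for a rational `q ∈ (β, ε)`. The perturbation `y = q eⱼ` leaves the first `m`
coordinates unchanged, so `m_{x+y,α} ≤ m ≤ j`, while `|(x + y)ⱼ| ≥ q - |xⱼ| > β`; hence
`x + y ∉ A_{α,β}`. -/

open Filter Topology

namespace ErdosSpace

theorem coords_add (x y : ErdosSpace) (k : ℕ) : coords (x + y) k = coords x k + coords y k :=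
  rfl

theorem hasSum_coords_sq (x : ErdosSpace) : HasSum (fun k => coords x k ^ 2) (‖x‖ ^ 2) := by
  have h := lp.hasSum_norm (p := 2) (by norm_num) (x : ellTwo)
  simp only [ENNReal.toReal_ofNat, Real.rpow_two, Real.norm_eq_abs, sq_abs] at h
  exact h

theorem tendsto_coords_zero (x : ErdosSpace) : Tendsto (coords x) atTop (𝓝 0) := by
  have h := (hasSum_coords_sq x).summable.tendsto_atTop_zero.sqrt
  simp only [Real.sqrt_sq_eq_abs, Real.sqrt_zero] at h
  exact tendsto_zero_iff_abs_tendsto_zero _ |>.mpr h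

theorem exists_lt_sqrt_sum_range_coords_sq (x : ErdosSpace) {α : ℝ} (hα : α < ‖x‖) :
    ∃ m, α < Real.sqrt (∑ k ∈ Finset.range m, coords x k ^ 2) := by
  have h := (hasSum_coords_sq x).tendsto_sum_nat.sqrt
  rw [Real.sqrt_sq (norm_nonneg x)] at h
  exact (h.eventually (lt_mem_nhds hα)).exists

def single (j : ℕ) (q : ℚ) : ErdosSpace :=
  ⟨lp.single 2 j (q : ℝ), fun k => by
    by_cases hk : k = j
    · exact ⟨q, by rw [hk, lp.single_apply_self]⟩
    · exact ⟨0, by rw [lp.single_apply_ne _ _ _ hk, Rat.cast_zero]⟩⟩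

theorem coords_single_self (j : ℕ) (q : ℚ) : coords (single j q) j = q :=
  lp.single_apply_self _ _ _

theorem coords_single_of_ne {j k : ℕ} (q : ℚ) (hk : k ≠ j) : coords (single j q) k = 0 :=
  lp.single_apply_ne _ _ _ hk

theorem norm_single (j : ℕ) (q : ℚ) : ‖single j q‖ = |(q : ℝ)| :=
  lp.norm_single (E := fun _ : ℕ => ℝ) (by norm_num) j (q : ℝ)

end ErdosSpace

open ErdosSpace

theorem notMem_A_of_le_abs_coords {z : ErdosSpace} {α β : ℝ} {m j : ℕ}
    (hm : α < Real.sqrt (∑ k ∈ Finset.range m, coords z k ^ 2)) (hmj : m ≤ j)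
    (hj : β ≤ |coords z j|) : z ∉ A α β := by
  rintro (⟨-, hsmall⟩ | hnot)
  · exact (hsmall j ((Nat.sInf_le hm).trans hmj)).not_ge hj
  · exact hnot ⟨m, hm⟩

theorem exists_norm_lt_add_notMem_A (x : ErdosSpace) {α β ε : ℝ} (hα : α < ‖x‖)
    (hβ : β < ε) (hε : 0 < ε) : ∃ y : ErdosSpace, ‖y‖ < ε ∧ x + y ∉ A α β := by
  obtain ⟨q, hβq, hqε⟩ := exists_rat_btwn (max_lt hβ hε)
  obtain ⟨hβq, hq⟩ := max_lt_iff.mp hβq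
  obtain ⟨m, hm⟩ := exists_lt_sqrt_sum_range_coords_sq x hα
  have hgap : |(0 : ℝ)| < q - β := by rwa [abs_zero, sub_pos]
  obtain ⟨j, hmj, hj⟩ := ((eventually_ge_atTop m).and
    ((tendsto_coords_zero x).abs.eventually (gt_mem_nhds hgap))).exists
  refine ⟨single j q, by rwa [norm_single, abs_of_pos hq], ?_⟩
  have hsum : ∑ k ∈ Finset.range m, coords (x + single j q) k ^ 2
      = ∑ k ∈ Finset.range m, coords x k ^ 2 := by
    refine Finset.sum_congr rfl fun k hk => ?_
    rw [coords_add, coords_single_of_ne q (Finset.mem_range.mp hk |>.trans_le hmj).ne, add_zero]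
  refine notMem_A_of_le_abs_coords (hsum ▸ hm) hmj ?_
  rw [coords_add, coords_single_self]
  linarith [neg_abs_le (coords x j), le_abs_self (coords x j + q)]

theorem K_plus_ball_not_subset_O_general (a b : ℕ → ℝ)
    (hbLim : Filter.Tendsto b Filter.atTop (nhds 0))
    (K : Set ErdosSpace) (hKunb : ∀ M : ℝ, 0 < M → ∃ x ∈ K, M < ‖x‖)
    (ε : ℝ) (hε : 0 < ε) :
    ∃ x ∈ K, ∃ y : ErdosSpace, ‖y‖ < ε ∧ x + y ∉ ⋂ n, A (a n) (b n) := by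
  obtain ⟨n, hn⟩ : ∃ n, b n < ε := (hbLim.eventually (gt_mem_nhds hε)).exists
  obtain ⟨x, hxK, hx⟩ := hKunb (|a n| + 1) (by positivity)
  obtain ⟨y, hy, hxy⟩ :=
    exists_norm_lt_add_notMem_A x ((le_abs_self _).trans_lt (by linarith)) hn hε
  exact ⟨x, hxK, y, hy, fun hO => hxy (Set.mem_iInter.mp hO n)⟩

/-- For `O = ⋂ₙ A_{αₙ,βₙ}`, any unbounded set `K` and any `ε > 0` satisfy
`K + B(0,ε) ⊄ O`. -/
theorem K_plus_ball_not_subset_O (a b : ℕ → ℝ) (ha0 : ∀ n, 0 < a n) (haMono : StrictMono a)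
    (haTop : Filter.Tendsto a Filter.atTop Filter.atTop)
    (haIrr : ∀ n, Irrational ((a n) ^ 2))
    (hb0 : ∀ n, 0 < b n) (hbAnti : StrictAnti b)
    (hbLim : Filter.Tendsto b Filter.atTop (nhds 0))
    (hbIrr : ∀ n, Irrational (b n))
    (K : Set ErdosSpace) (hKunb : ∀ M : ℝ, 0 < M → ∃ x ∈ K, M < ‖x‖)
    (ε : ℝ) (hε : 0 < ε) :
    ∃ x ∈ K, ∃ y : ErdosSpace, ‖y‖ < ε ∧ x + y ∉ ⋂ n, A (a n) (b n) :=
  K_plus_ball_not_subset_O_general a b hbLim K hKunb ε hε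
end
end
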